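/- arXiv:0901.3506 — 7 statements merged into one kernel-verified Lean document; each statement's English description precedes it below -/
import Mathlib

section
/- Let A, B, C be Banach algebras and let T₁ : A → B and T₂ : B → C be bounded cf-homomorphisms. Then the composite T₂ ∘ T₁ : A → C is a bounded cf-homomorphism. -/
open Metric

/-- `T` is a cf-homomorphism: its failure of multiplicativity
`S_T(a,b) = T a * T b - T (a*b)` is a compact bilinear map, i.e. the norm closure of the
image of the product of the open unit balls under `S_T` is compact. -/
def IsCfHomomorphism {A B : Type*}
    [NonUnitalNormedRing A] [NormedSpace ℂ A]
    [NonUnitalNormedRing B] [NormedSpace ℂ B]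
    (T : A →L[ℂ] B) : Prop :=
  IsCompact (closure
    (Set.image2 (fun a b => T a * T b - T (a * b)) (ball (0 : A) 1) (ball (0 : A) 1)))

open Pointwise Set

/-! `S_{T₂ ∘ T₁}(a, b) = S_{T₂}(T₁ a, T₁ b) + T₂ (S_{T₁}(a, b))`. The second term ranges over
the image of a compact set under `T₂`. In the first, `T₁ a` and `T₁ b` lie in the ball of radius
`r = ‖T₁‖ + 1`, and since `S_{T₂}` is bilinear its values on that ball are `r²` times its values
on the unit ball, again a relatively compact set. A sum of two compact sets is compact. -/

namespace ContinuousLinearMap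

variable {A B C : Type*} [NonUnitalNormedRing A] [NormedSpace ℂ A]
  [NonUnitalNormedRing B] [NormedSpace ℂ B] [NonUnitalNormedRing C] [NormedSpace ℂ C]

def mulDefect (T : A →L[ℂ] B) (a b : A) : B := T a * T b - T (a * b)

theorem mulDefect_comp (T₂ : B →L[ℂ] C) (T₁ : A →L[ℂ] B) (a b : A) :
    (T₂.comp T₁).mulDefect a b = T₂.mulDefect (T₁ a) (T₁ b) + T₂ (T₁.mulDefect a b) := by
  simp only [mulDefect, comp_apply, map_sub]
  abel

theorem mulDefect_smul_smul [IsScalarTower ℂ A A] [SMulCommClass ℂ A A]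
    [IsScalarTower ℂ B B] [SMulCommClass ℂ B B] (T : A →L[ℂ] B) (c : ℂ) (a b : A) :
    T.mulDefect (c • a) (c • b) = c ^ 2 • T.mulDefect a b := by
  simp only [mulDefect, map_smul, smul_mul_smul_comm, smul_sub, pow_two]

theorem image2_mulDefect_ball_subset [IsScalarTower ℂ A A] [SMulCommClass ℂ A A]
    [IsScalarTower ℂ B B] [SMulCommClass ℂ B B] (T : A →L[ℂ] B) {r : ℝ} (hr : 0 < r) :
    image2 T.mulDefect (ball 0 r) (ball 0 r) ⊆
      (r : ℂ) ^ 2 • image2 T.mulDefect (ball 0 1) (ball 0 1) := by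
  have hball : ball (0 : A) r = (r : ℂ) • ball 0 1 := by
    rw [smul_unitBall (by exact_mod_cast hr.ne'), Complex.norm_real, Real.norm_of_nonneg hr.le]
  rw [hball]
  rintro _ ⟨_, ⟨a, ha, rfl⟩, _, ⟨b, hb, rfl⟩, rfl⟩
  rw [mulDefect_smul_smul]
  exact smul_mem_smul_set (mem_image2_of_mem ha hb)

theorem mapsTo_ball_norm_add_one (T : A →L[ℂ] B) : MapsTo T (ball 0 1) (ball 0 (‖T‖ + 1)) := by
  intro a ha
  rw [mem_ball_zero_iff] at ha ⊢
  calc ‖T a‖ ≤ ‖T‖ * ‖a‖ := T.le_opNorm a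
    _ ≤ ‖T‖ * 1 := by gcongr
    _ < ‖T‖ + 1 := by linarith

end ContinuousLinearMap

open ContinuousLinearMap

theorem IsCfHomomorphism.isCompact_closure_image2_mulDefect_ball {A B : Type*}
    [NonUnitalNormedRing A] [NormedSpace ℂ A] [IsScalarTower ℂ A A] [SMulCommClass ℂ A A]
    [NonUnitalNormedRing B] [NormedSpace ℂ B] [IsScalarTower ℂ B B] [SMulCommClass ℂ B B]
    {T : A →L[ℂ] B} (hT : IsCfHomomorphism T) {r : ℝ} (hr : 0 < r) :
    IsCompact (closure (image2 T.mulDefect (ball 0 r) (ball 0 r))) :=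
  (hT.smul ((r : ℂ) ^ 2)).closure_of_subset
    ((T.image2_mulDefect_ball_subset hr).trans (smul_set_mono subset_closure))

theorem isCfHomomorphism_comp_general {A B C : Type*}
    [NonUnitalNormedRing A] [NormedSpace ℂ A]
    [NonUnitalNormedRing B] [NormedSpace ℂ B] [IsScalarTower ℂ B B] [SMulCommClass ℂ B B]
    [NonUnitalNormedRing C] [NormedSpace ℂ C] [IsScalarTower ℂ C C] [SMulCommClass ℂ C C]
    (T₁ : A →L[ℂ] B) (T₂ : B →L[ℂ] C)
    (h₁ : IsCfHomomorphism T₁) (h₂ : IsCfHomomorphism T₂) :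
    IsCfHomomorphism (T₂.comp T₁) := by
  have hT₁ := T₁.mapsTo_ball_norm_add_one
  have hK := (h₂.isCompact_closure_image2_mulDefect_ball (by positivity : 0 < ‖T₁‖ + 1)).add
    (h₁.image T₂.continuous)
  refine hK.closure_of_subset ?_
  rintro _ ⟨a, ha, b, hb, rfl⟩
  exact ⟨_, subset_closure (mem_image2_of_mem (hT₁ ha) (hT₁ hb)),
    _, mem_image_of_mem T₂ (subset_closure (mem_image2_of_mem ha hb)),
    (mulDefect_comp T₂ T₁ a b).symm⟩

/-- the composite of two bounded cf-homomorphisms between Banach algebras is a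
bounded cf-homomorphism. -/
theorem isCfHomomorphism_comp {A B C : Type*}
    [NonUnitalNormedRing A] [NormedSpace ℂ A] [IsScalarTower ℂ A A] [SMulCommClass ℂ A A]
    [CompleteSpace A]
    [NonUnitalNormedRing B] [NormedSpace ℂ B] [IsScalarTower ℂ B B] [SMulCommClass ℂ B B]
    [CompleteSpace B]
    [NonUnitalNormedRing C] [NormedSpace ℂ C] [IsScalarTower ℂ C C] [SMulCommClass ℂ C C]
    [CompleteSpace C]
    (T₁ : A →L[ℂ] B) (T₂ : B →L[ℂ] C)
    (h₁ : IsCfHomomorphism T₁) (h₂ : IsCfHomomorphism T₂) :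
    IsCfHomomorphism (T₂.comp T₁) :=
  isCfHomomorphism_comp_general T₁ T₂ h₁ h₂
end

section
/- Let A and B be Banach algebras and let T : A → B be a bijective bounded cf-homomorphism. Then the inverse map T⁻¹ : B → A is a bounded linear map and is a cf-homomorphism. -/
/-!
By the open mapping theorem `T⁻¹` is bounded. Its failure of multiplicativity is
`S_{T⁻¹}(x, y) = -T⁻¹ (S_T (T⁻¹ x, T⁻¹ y))`, and `T⁻¹` maps the unit ball into a bounded set.
Since `S_T (c a, c b) = c² S_T (a, b)`, compactness of `S_T` on unit balls gives relative
compactness of its image on any bounded sets, and the continuous map `-T⁻¹` preserves it.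
-/

open Metric

open Bornology Pointwise

section

variable {A B : Type*} [NonUnitalNormedRing A] [NormedSpace ℂ A]
  [NonUnitalNormedRing B] [NormedSpace ℂ B]

/-- The failure of multiplicativity `S_T`. -/
def mulDefect (T : A →L[ℂ] B) (a b : A) : B := T a * T b - T (a * b)

theorem ContinuousLinearEquiv.mulDefect_symm (e : A ≃L[ℂ] B) (x y : B) :
    mulDefect (e.symm : B →L[ℂ] A) x y =
      -e.symm (mulDefect (e : A →L[ℂ] B) (e.symm x) (e.symm y)) := by
  simp only [mulDefect, coe_coe, apply_symm_apply, map_sub, symm_apply_apply, neg_sub]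

variable [IsScalarTower ℂ A A] [SMulCommClass ℂ A A] [IsScalarTower ℂ B B] [SMulCommClass ℂ B B]

theorem mulDefect_smul_smul (T : A →L[ℂ] B) (c : ℂ) (a b : A) :
    mulDefect T (c • a) (c • b) = c ^ 2 • mulDefect T a b := by
  simp only [mulDefect, map_smul, smul_mul_assoc, mul_smul_comm, smul_sub, smul_smul, sq]

theorem IsCfHomomorphism.isCompact_closure_image2_ball {T : A →L[ℂ] B}
    (hT : IsCfHomomorphism T) {r : ℝ} (hr : 0 < r) :
    IsCompact (closure (Set.image2 (mulDefect T) (ball (0 : A) r) (ball (0 : A) r))) := by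
  have hball : ball (0 : A) r = (r : ℂ) • ball (0 : A) 1 := by
    rw [smul_unitBall (by exact_mod_cast hr.ne'), Complex.norm_real, Real.norm_of_nonneg hr.le]
  refine (hT.image (continuous_const_smul ((r : ℂ) ^ 2))).closure_of_subset ?_
  rw [hball]
  rintro _ ⟨_, ⟨a, ha, rfl⟩, _, ⟨b, hb, rfl⟩, rfl⟩
  exact ⟨_, subset_closure ⟨a, ha, b, hb, rfl⟩, (mulDefect_smul_smul T _ a b).symm⟩

theorem IsCfHomomorphism.isCompact_closure_image2 {T : A →L[ℂ] B}
    (hT : IsCfHomomorphism T) {s t : Set A} (hs : IsBounded s) (ht : IsBounded t) :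
    IsCompact (closure (Set.image2 (mulDefect T) s t)) := by
  obtain ⟨r, hr, hsr⟩ := (hs.union ht).subset_ball_lt 0 0
  exact (hT.isCompact_closure_image2_ball hr).closure_of_subset <|
    (Set.image2_subset (Set.subset_union_left.trans hsr) (Set.subset_union_right.trans hsr)).trans
      subset_closure

end

/-- the inverse of a bijective bounded cf-homomorphism between Banach algebras
is a bounded linear map and a cf-homomorphism. -/
theorem isCfHomomorphism_inverse {A B : Type*}
    [NonUnitalNormedRing A] [NormedSpace ℂ A] [IsScalarTower ℂ A A] [SMulCommClass ℂ A A]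
    [CompleteSpace A]
    [NonUnitalNormedRing B] [NormedSpace ℂ B] [IsScalarTower ℂ B B] [SMulCommClass ℂ B B]
    [CompleteSpace B]
    (T : A →L[ℂ] B) (hbij : Function.Bijective T) (hT : IsCfHomomorphism T) :
    ∃ T' : B →L[ℂ] A,
      (∀ a : A, T' (T a) = a) ∧ (∀ b : B, T (T' b) = b) ∧ IsCfHomomorphism T' := by
  let e : A ≃L[ℂ] B :=
    .ofBijective T (LinearMap.ker_eq_bot.mpr hbij.1) (LinearMap.range_eq_top.mpr hbij.2)
  refine ⟨e.symm, e.symm_apply_apply, e.apply_symm_apply, ?_⟩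
  have hbdd : IsBounded ((e.symm : B →L[ℂ] A) '' ball 0 1) := isBounded_ball.image _
  refine ((hT.isCompact_closure_image2 hbdd hbdd).image
    (e.symm : B →L[ℂ] A).continuous.neg).closure_of_subset ?_
  rintro _ ⟨x, hx, y, hy, rfl⟩
  exact ⟨_, subset_closure ⟨_, ⟨x, hx, rfl⟩, _, ⟨y, hy, rfl⟩, rfl⟩, (e.mulDefect_symm x y).symm⟩
end

section
/- Let n ∈ ℕ and let E₁, …, Eₙ and F be Banach spaces over ℂ. The collection of compact bounded n-linear maps from E₁ × ⋯ × Eₙ to F is a closed linear subspace of the Banach space of all bounded n-linear maps from E₁ × ⋯ × Eₙ to F with the operator norm: it contains 0, is closed under addition and scalar multiplication, and is closed in the operator norm topology. -/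
/-!
Adding or scaling maps moves the image of the unit polyball into the sum or scalar multiple of
compact sets, which is compact. For closedness, `F` is complete, so a map is compact exactly when
that image is totally bounded; a finite `ε/2`-net for a compact `S` with `‖T - S‖ < ε/2` is an
`ε`-net for `T`, because `‖T x - S x‖ ≤ ‖T - S‖` on the polyball.
-/

open Set Metric Pointwise

/-- A bounded `n`-linear map `T` is *compact* if the norm closure of the image under `T` of
the product of the open unit balls is compact. -/
def IsCompactMultilinearMap {n : ℕ} {E : Fin n → Type*} {F : Type*}
    [∀ i, NormedAddCommGroup (E i)] [∀ i, NormedSpace ℂ (E i)]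
    [NormedAddCommGroup F] [NormedSpace ℂ F]
    (T : ContinuousMultilinearMap ℂ E F) : Prop :=
  IsCompact (closure (⇑T '' {x : ∀ i, E i | ∀ i, ‖x i‖ < 1}))

theorem isClosed_setOf_totallyBounded_image {X α β : Type*} [PseudoMetricSpace X]
    [PseudoMetricSpace β] {f : X → α → β} {s : Set α}
    (hf : ∀ x y, ∀ a ∈ s, dist (f x a) (f y a) ≤ dist x y) :
    IsClosed {x | TotallyBounded (f x '' s)} := by
  refine isClosed_of_closure_subset fun x hx ↦ totallyBounded_iff.mpr fun ε hε ↦ ?_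
  obtain ⟨y, hy, hxy⟩ := mem_closure_iff.mp hx (ε / 2) (half_pos hε)
  obtain ⟨t, ht, hcover⟩ := totallyBounded_iff.mp hy (ε / 2) (half_pos hε)
  refine ⟨t, ht, ?_⟩
  rintro _ ⟨a, ha, rfl⟩
  obtain ⟨z, hz, hyz⟩ := mem_iUnion₂.mp (hcover (mem_image_of_mem (f y) ha))
  refine mem_iUnion₂.mpr ⟨z, hz, ?_⟩
  calc dist (f x a) z ≤ dist (f x a) (f y a) + dist (f y a) z := dist_triangle _ _ _
    _ < ε / 2 + ε / 2 := add_lt_add_of_le_of_lt ((hf x y a ha).trans hxy.le) (mem_ball.mp hyz)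
    _ = ε := add_halves ε

theorem ContinuousMultilinearMap.dist_apply_le_of_norm_le_one {𝕜 ι : Type*} [Fintype ι]
    {E : ι → Type*} {F : Type*} [NontriviallyNormedField 𝕜] [∀ i, SeminormedAddCommGroup (E i)]
    [∀ i, NormedSpace 𝕜 (E i)] [SeminormedAddCommGroup F] [NormedSpace 𝕜 F]
    (T S : ContinuousMultilinearMap 𝕜 E F) {x : ∀ i, E i} (hx : ∀ i, ‖x i‖ ≤ 1) :
    dist (T x) (S x) ≤ dist T S := by
  simpa [dist_eq_norm] using (T - S).le_opNorm_mul_prod_of_le hx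

section

variable {n : ℕ} {E : Fin n → Type*} {F : Type*} [∀ i, NormedAddCommGroup (E i)]
  [∀ i, NormedSpace ℂ (E i)] [NormedAddCommGroup F] [NormedSpace ℂ F]

theorem isCompactMultilinearMap_iff_totallyBounded [CompleteSpace F]
    (T : ContinuousMultilinearMap ℂ E F) :
    IsCompactMultilinearMap T ↔ TotallyBounded (⇑T '' {x : ∀ i, E i | ∀ i, ‖x i‖ < 1}) :=
  ⟨fun h ↦ h.totallyBounded.subset subset_closure,
    fun h ↦ h.closure.isCompact_of_isClosed isClosed_closure⟩

theorem isCompactMultilinearMap_zero :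
    IsCompactMultilinearMap (0 : ContinuousMultilinearMap ℂ E F) :=
  isCompact_singleton.closure_of_subset <| by rintro _ ⟨x, -, rfl⟩; rfl

theorem IsCompactMultilinearMap.add {T S : ContinuousMultilinearMap ℂ E F}
    (hT : IsCompactMultilinearMap T) (hS : IsCompactMultilinearMap S) :
    IsCompactMultilinearMap (T + S) :=
  (IsCompact.add hT hS).closure_of_subset <| by
    rintro _ ⟨x, hx, rfl⟩
    exact add_mem_add (subset_closure (mem_image_of_mem T hx))
      (subset_closure (mem_image_of_mem S hx))

theorem IsCompactMultilinearMap.smul (c : ℂ) {T : ContinuousMultilinearMap ℂ E F}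
    (hT : IsCompactMultilinearMap T) : IsCompactMultilinearMap (c • T) :=
  (IsCompact.smul c hT).closure_of_subset <| by
    rintro _ ⟨x, hx, rfl⟩
    exact smul_mem_smul_set (subset_closure (mem_image_of_mem T hx))

theorem isClosed_setOf_isCompactMultilinearMap [CompleteSpace F] :
    IsClosed {T : ContinuousMultilinearMap ℂ E F | IsCompactMultilinearMap T} := by
  simp only [isCompactMultilinearMap_iff_totallyBounded]
  exact isClosed_setOf_totallyBounded_image fun T S x hx ↦
    T.dist_apply_le_of_norm_le_one S fun i ↦ (hx i).le

end

theorem isCompactMultilinearMap_closed_subspace_general (n : ℕ) (E : Fin n → Type*)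
    [∀ i, NormedAddCommGroup (E i)] [∀ i, NormedSpace ℂ (E i)]
    (F : Type*) [NormedAddCommGroup F] [NormedSpace ℂ F] [CompleteSpace F] :
    IsCompactMultilinearMap (0 : ContinuousMultilinearMap ℂ E F) ∧
    (∀ T S : ContinuousMultilinearMap ℂ E F,
      IsCompactMultilinearMap T → IsCompactMultilinearMap S → IsCompactMultilinearMap (T + S)) ∧
    (∀ (c : ℂ) (T : ContinuousMultilinearMap ℂ E F),
      IsCompactMultilinearMap T → IsCompactMultilinearMap (c • T)) ∧
    IsClosed {T : ContinuousMultilinearMap ℂ E F | IsCompactMultilinearMap T} :=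
  ⟨isCompactMultilinearMap_zero, fun _ _ ↦ .add, fun c _ ↦ .smul c,
    isClosed_setOf_isCompactMultilinearMap⟩

/-- the compact bounded `n`-linear maps from `E₁ × ⋯ × Eₙ` to `F` form a closed
linear subspace of the Banach space of bounded `n`-linear maps: they contain `0`, are closed
under addition and scalar multiplication, and form a closed set in the operator norm. -/
theorem isCompactMultilinearMap_closed_subspace (n : ℕ) (E : Fin n → Type*)
    [∀ i, NormedAddCommGroup (E i)] [∀ i, NormedSpace ℂ (E i)] [∀ i, CompleteSpace (E i)]
    (F : Type*) [NormedAddCommGroup F] [NormedSpace ℂ F] [CompleteSpace F] :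
    IsCompactMultilinearMap (0 : ContinuousMultilinearMap ℂ E F) ∧
    (∀ T S : ContinuousMultilinearMap ℂ E F,
      IsCompactMultilinearMap T → IsCompactMultilinearMap S → IsCompactMultilinearMap (T + S)) ∧
    (∀ (c : ℂ) (T : ContinuousMultilinearMap ℂ E F),
      IsCompactMultilinearMap T → IsCompactMultilinearMap (c • T)) ∧
    IsClosed {T : ContinuousMultilinearMap ℂ E F | IsCompactMultilinearMap T} :=
  isCompactMultilinearMap_closed_subspace_general n E F
end

section
/- Let n ∈ ℕ and let E₁, …, Eₙ and F be Banach spaces over ℂ. The collection of weakly compact bounded n-linear maps from E₁ × ⋯ × Eₙ to F is a closed linear subspace of the Banach space of all bounded n-linear maps from E₁ × ⋯ × Eₙ to F with the operator norm: it contains 0, is closed under addition and scalar multiplication, and is closed in the operator norm topology. -/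
/-- A bounded `n`-linear map `T` into a Banach space `F` is *weakly compact* if the closure,
in the weak topology of `F`, of the image under `T` of the product of the open unit balls is
weakly compact. -/
def IsWeaklyCompactMultilinearMap {n : ℕ} {E : Fin n → Type*} {F : Type*}
    [∀ i, NormedAddCommGroup (E i)] [∀ i, NormedSpace ℂ (E i)]
    [NormedAddCommGroup F] [NormedSpace ℂ F]
    (T : ContinuousMultilinearMap ℂ E F) : Prop :=
  IsCompact (closure ((toWeakSpace ℂ F) '' (⇑T '' {x : ∀ i, E i | ∀ i, ‖x i‖ < 1})))

/-!
Weakly compact sets are stable under sums and scalar multiples, which gives the linear structure.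
For closedness, if `‖T - S‖ ≤ ε` then `T` maps the unit ball into `S(ball) + closedBall 0 ε`, so the
image of the unit ball under a limit of weakly compact maps is a bounded set that lies within every
positive distance of a relatively weakly compact one. Grothendieck's lemma says that such a set is
relatively weakly compact: in the weak-star topology of the bidual its closure stays within `ε` of
the canonical copy of `F` for every `ε` (by Banach–Alaoglu), and that copy is norm-closed.
-/

open Set Metric Bornology Pointwise NormedSpace

section WeaklyCompact

variable (𝕜 : Type*) {X : Type*} [RCLike 𝕜] [NormedAddCommGroup X] [NormedSpace 𝕜 X]

def IsRelativelyWeaklyCompact (S : Set X) : Prop :=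
  IsCompact (closure (toWeakSpace 𝕜 X '' S))

variable {𝕜}

theorem IsRelativelyWeaklyCompact.mono {S T : Set X} (hT : IsRelativelyWeaklyCompact 𝕜 T)
    (hST : S ⊆ T) : IsRelativelyWeaklyCompact 𝕜 S :=
  hT.of_isClosed_subset isClosed_closure (closure_mono (image_mono hST))

theorem isRelativelyWeaklyCompact_singleton (x : X) : IsRelativelyWeaklyCompact 𝕜 {x} := by
  simp [IsRelativelyWeaklyCompact]

theorem IsRelativelyWeaklyCompact.add {S T : Set X} (hS : IsRelativelyWeaklyCompact 𝕜 S)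
    (hT : IsRelativelyWeaklyCompact 𝕜 T) : IsRelativelyWeaklyCompact 𝕜 (S + T) := by
  have hST := IsCompact.add hS hT
  refine hST.of_isClosed_subset isClosed_closure (closure_minimal ?_ hST.isClosed)
  rw [Set.image_add]
  exact add_subset_add subset_closure subset_closure

theorem IsRelativelyWeaklyCompact.smul {S : Set X} (hS : IsRelativelyWeaklyCompact 𝕜 S) (c : 𝕜) :
    IsRelativelyWeaklyCompact 𝕜 (c • S) := by
  have hcS := IsCompact.smul c hS
  refine hcS.of_isClosed_subset isClosed_closure (closure_minimal ?_ hcS.isClosed)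
  rw [image_smul_set]
  exact smul_set_mono subset_closure

theorem exists_dist_inclusionInDoubleDual_le {S K : Set X} {ε : ℝ}
    (hK : IsRelativelyWeaklyCompact 𝕜 K) (hSK : S ⊆ K + closedBall 0 ε)
    {φ : WeakDual 𝕜 (StrongDual 𝕜 X)}
    (hφ : φ ∈ closure (inclusionInDoubleDualWeak 𝕜 X '' (toWeakSpace 𝕜 X '' S))) :
    ∃ x : X, dist (WeakDual.toStrongDual φ) (inclusionInDoubleDual 𝕜 X x) ≤ ε := by
  set J := inclusionInDoubleDualWeak 𝕜 X
  have hcpt : IsCompact (J '' closure (toWeakSpace 𝕜 X '' K) +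
      WeakDual.toStrongDual ⁻¹' closedBall 0 ε) :=
    (hK.image J.continuous).add (WeakDual.isCompact_closedBall 0 ε)
  have hsub : J '' (toWeakSpace 𝕜 X '' S) ⊆ J '' closure (toWeakSpace 𝕜 X '' K) +
      WeakDual.toStrongDual ⁻¹' closedBall 0 ε := by
    rintro _ ⟨_, ⟨_, hx, rfl⟩, rfl⟩
    obtain ⟨k, hk, b, hb, rfl⟩ := hSK hx
    rw [map_add, map_add]
    refine add_mem_add (mem_image_of_mem J (subset_closure (mem_image_of_mem _ hk))) ?_
    rw [mem_closedBall_zero_iff] at hb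
    exact (dist_zero_right (inclusionInDoubleDual 𝕜 X b)).trans_le
      ((double_dual_bound 𝕜 X b).trans hb)
  obtain ⟨_, ⟨k, -, rfl⟩, ψ, hψ, rfl⟩ := closure_minimal hsub hcpt.isClosed hφ
  exact ⟨(toWeakSpace 𝕜 X).symm k, (dist_self_add_left (WeakDual.toStrongDual ψ)
    (inclusionInDoubleDual 𝕜 X ((toWeakSpace 𝕜 X).symm k))).trans_le
    ((dist_zero_right _).symm.trans_le hψ)⟩

/-- Grothendieck's lemma. -/
theorem isRelativelyWeaklyCompact_of_forall_subset_add_closedBall [CompleteSpace X] {S : Set X}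
    (hS : IsBounded S)
    (hK : ∀ ε > 0, ∃ K : Set X, IsRelativelyWeaklyCompact 𝕜 K ∧ S ⊆ K + closedBall 0 ε) :
    IsRelativelyWeaklyCompact 𝕜 S := by
  refine isCompact_closure_of_isBounded 𝕜 X _
    (by rwa [(toWeakSpace 𝕜 X).injective.preimage_image]) fun φ hφ ↦ ?_
  have hrange : IsClosed (range (inclusionInDoubleDual 𝕜 X)) :=
    (Isometry.isClosedEmbedding (γ := StrongDual 𝕜 (StrongDual 𝕜 X))
      (inclusionInDoubleDualLi 𝕜).isometry).isClosed_range
  obtain ⟨x, hx⟩ : WeakDual.toStrongDual φ ∈ range (inclusionInDoubleDual 𝕜 X) := by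
    refine hrange.closure_subset
      ((Metric.mem_closure_iff (α := StrongDual 𝕜 (StrongDual 𝕜 X))).2 fun ε hε ↦ ?_)
    obtain ⟨K, hKc, hSK⟩ := hK (ε / 2) (half_pos hε)
    obtain ⟨x, hx⟩ := exists_dist_inclusionInDoubleDual_le hKc hSK hφ
    exact ⟨_, mem_range_self x, hx.trans_lt (half_lt_self hε)⟩
  exact ⟨toWeakSpace 𝕜 X x, hx⟩

end WeaklyCompact

namespace ContinuousMultilinearMap

variable {𝕜 : Type*} [NontriviallyNormedField 𝕜] {ι : Type*} [Fintype ι] {E : ι → Type*}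
  [∀ i, SeminormedAddCommGroup (E i)] [∀ i, NormedSpace 𝕜 (E i)]
  {G : Type*} [SeminormedAddCommGroup G] [NormedSpace 𝕜 G]

theorem norm_apply_le_of_forall_norm_lt_one (T : ContinuousMultilinearMap 𝕜 E G) {x : ∀ i, E i}
    (hx : ∀ i, ‖x i‖ < 1) : ‖T x‖ ≤ ‖T‖ :=
  T.unit_le_opNorm ((pi_norm_le_iff_of_nonneg zero_le_one).2 fun i ↦ (hx i).le)

theorem isBounded_image_unitBall (T : ContinuousMultilinearMap 𝕜 E G) :
    IsBounded (T '' {x | ∀ i, ‖x i‖ < 1}) :=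
  isBounded_iff_forall_norm_le.2 ⟨‖T‖, by
    rintro _ ⟨x, hx, rfl⟩
    exact T.norm_apply_le_of_forall_norm_lt_one hx⟩

theorem image_unitBall_subset_add_closedBall (T S : ContinuousMultilinearMap 𝕜 E G) :
    T '' {x | ∀ i, ‖x i‖ < 1} ⊆ S '' {x | ∀ i, ‖x i‖ < 1} + closedBall 0 ‖T - S‖ := by
  rintro _ ⟨x, hx, rfl⟩
  refine ⟨S x, mem_image_of_mem S hx, (T - S) x, ?_, add_sub_cancel _ _⟩
  exact mem_closedBall_zero_iff.2 ((T - S).norm_apply_le_of_forall_norm_lt_one hx)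

end ContinuousMultilinearMap

theorem isWeaklyCompactMultilinearMap_iff {n : ℕ} {E : Fin n → Type*}
    [∀ i, NormedAddCommGroup (E i)] [∀ i, NormedSpace ℂ (E i)]
    {F : Type*} [NormedAddCommGroup F] [NormedSpace ℂ F] (T : ContinuousMultilinearMap ℂ E F) :
    IsWeaklyCompactMultilinearMap T ↔
      IsRelativelyWeaklyCompact ℂ (T '' {x : ∀ i, E i | ∀ i, ‖x i‖ < 1}) :=
  Iff.rfl

theorem isWeaklyCompactMultilinearMap_closed_subspace_general (n : ℕ) (E : Fin n → Type*)
    [∀ i, NormedAddCommGroup (E i)] [∀ i, NormedSpace ℂ (E i)]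
    (F : Type*) [NormedAddCommGroup F] [NormedSpace ℂ F] [CompleteSpace F] :
    IsWeaklyCompactMultilinearMap (0 : ContinuousMultilinearMap ℂ E F) ∧
    (∀ T S : ContinuousMultilinearMap ℂ E F,
      IsWeaklyCompactMultilinearMap T → IsWeaklyCompactMultilinearMap S →
        IsWeaklyCompactMultilinearMap (T + S)) ∧
    (∀ (c : ℂ) (T : ContinuousMultilinearMap ℂ E F),
      IsWeaklyCompactMultilinearMap T → IsWeaklyCompactMultilinearMap (c • T)) ∧
    IsClosed {T : ContinuousMultilinearMap ℂ E F | IsWeaklyCompactMultilinearMap T} := by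
  simp_rw [isWeaklyCompactMultilinearMap_iff]
  refine ⟨?_, fun T S hT hS ↦ ?_, fun c T hT ↦ ?_, isClosed_of_closure_subset fun T hT ↦ ?_⟩
  · refine (isRelativelyWeaklyCompact_singleton 0).mono ?_
    rintro _ ⟨x, -, rfl⟩
    rfl
  · refine (hT.add hS).mono ?_
    rintro _ ⟨x, hx, rfl⟩
    exact add_mem_add (mem_image_of_mem T hx) (mem_image_of_mem S hx)
  · refine (hT.smul c).mono ?_
    rintro _ ⟨x, hx, rfl⟩
    exact smul_mem_smul_set (mem_image_of_mem T hx)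
  · refine isRelativelyWeaklyCompact_of_forall_subset_add_closedBall T.isBounded_image_unitBall
      fun ε hε ↦ ?_
    obtain ⟨S, hS, hTS⟩ := Metric.mem_closure_iff.1 hT ε hε
    refine ⟨_, hS, (T.image_unitBall_subset_add_closedBall S).trans ?_⟩
    exact add_subset_add_left (closedBall_subset_closedBall (dist_eq_norm T S ▸ hTS.le))

/-- the weakly compact bounded `n`-linear maps from `E₁ × ⋯ × Eₙ` to `F` form a
closed linear subspace of the Banach space of bounded `n`-linear maps: they contain `0`, are
closed under addition and scalar multiplication, and form a closed set in the operator norm. -/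
theorem isWeaklyCompactMultilinearMap_closed_subspace (n : ℕ) (E : Fin n → Type*)
    [∀ i, NormedAddCommGroup (E i)] [∀ i, NormedSpace ℂ (E i)] [∀ i, CompleteSpace (E i)]
    (F : Type*) [NormedAddCommGroup F] [NormedSpace ℂ F] [CompleteSpace F] :
    IsWeaklyCompactMultilinearMap (0 : ContinuousMultilinearMap ℂ E F) ∧
    (∀ T S : ContinuousMultilinearMap ℂ E F,
      IsWeaklyCompactMultilinearMap T → IsWeaklyCompactMultilinearMap S →
        IsWeaklyCompactMultilinearMap (T + S)) ∧
    (∀ (c : ℂ) (T : ContinuousMultilinearMap ℂ E F),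
      IsWeaklyCompactMultilinearMap T → IsWeaklyCompactMultilinearMap (c • T)) ∧
    IsClosed {T : ContinuousMultilinearMap ℂ E F | IsWeaklyCompactMultilinearMap T} :=
  isWeaklyCompactMultilinearMap_closed_subspace_general n E F
end

section
/- Let E₁ and E₂ be normed spaces over ℂ, let F be a Banach space, let T : E₁ × E₂ → F be a bounded bilinear map, and let T̃ : E₁ ⊗ E₂ → F be the unique linear map with T̃(x ⊗ y) = T(x,y); equip E₁ ⊗ E₂ with the projective tensor seminorm π. Then T is a compact bilinear map if and only if the norm closure of T̃({z ∈ E₁ ⊗ E₂ : π(z) < 1}) is a compact subset of F. -/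
/-!
Let `K` be the closure of the image under `T` of the product of the open unit balls; it contains
`T (x/‖x‖, y/‖y‖)` for all `x, y`. An element `z` with `π(z) < 1` is some `Σ xᵢ ⊗ yᵢ` with
`Σ ‖xᵢ‖ ‖yᵢ‖ < 1`, so `T̃ z = Σ ‖xᵢ‖ ‖yᵢ‖ T (xᵢ/‖xᵢ‖, yᵢ/‖yᵢ‖)` is a sub-convex combination of
points of `K`, hence lies in the convex hull of `K ∋ 0`. If `K` is compact, so is the closed
convex hull of `K` in the Banach space `F`. Conversely `π(x ⊗ y) ≤ ‖x‖ ‖y‖`, so the image of the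
product of the unit balls under `T` is contained in `T̃ {π < 1}`.
-/

open Metric TensorProduct

/-- The projective tensor seminorm on `E₁ ⊗ E₂`:
`π(z) = inf { Σᵢ ‖xᵢ‖·‖yᵢ‖ : z = Σᵢ xᵢ ⊗ yᵢ }`. -/
noncomputable def projTensorSeminorm {E₁ E₂ : Type*}
    [NormedAddCommGroup E₁] [NormedSpace ℂ E₁] [NormedAddCommGroup E₂] [NormedSpace ℂ E₂]
    (z : E₁ ⊗[ℂ] E₂) : ℝ :=
  sInf {c : ℝ | ∃ l : List (E₁ × E₂),
    z = (l.map fun p => p.1 ⊗ₜ[ℂ] p.2).sum ∧ c = (l.map fun p => ‖p.1‖ * ‖p.2‖).sum}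

open Set Pointwise

theorem Convex.list_sum_smul_mem_sum_smul {ι 𝕜 E : Type*} [Field 𝕜] [LinearOrder 𝕜]
    [IsStrictOrderedRing 𝕜] [AddCommGroup E] [Module 𝕜 E]
    {C : Set E} (hC : Convex 𝕜 C) (hne : C.Nonempty) (w : ι → 𝕜) (c : ι → E) :
    ∀ l : List ι, (∀ i ∈ l, 0 ≤ w i) → (∀ i ∈ l, c i ∈ C) →
      (l.map fun i => w i • c i).sum ∈ (l.map w).sum • C
  | [], _, _ => by simp [zero_smul_set hne]
  | i :: l, hw, hc => by
    have hl_nonneg : 0 ≤ (l.map w).sum :=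
      List.sum_nonneg (by simpa using fun j hj => hw j (List.mem_cons_of_mem _ hj))
    rw [List.map_cons, List.map_cons, List.sum_cons, List.sum_cons,
      hC.add_smul (hw i List.mem_cons_self) hl_nonneg]
    exact add_mem_add (smul_mem_smul_set (hc i List.mem_cons_self))
      (hC.list_sum_smul_mem_sum_smul hne w c l (fun j hj => hw j (List.mem_cons_of_mem _ hj))
        (fun j hj => hc j (List.mem_cons_of_mem _ hj)))

theorem Convex.list_sum_smul_mem {ι 𝕜 E : Type*} [Field 𝕜] [LinearOrder 𝕜]
    [IsStrictOrderedRing 𝕜] [AddCommGroup E] [Module 𝕜 E]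
    {C : Set E} (hC : Convex 𝕜 C) (h0 : (0 : E) ∈ C) {w : ι → 𝕜} {c : ι → E} {l : List ι}
    (hw : ∀ i ∈ l, 0 ≤ w i) (hc : ∀ i ∈ l, c i ∈ C) (hsum : (l.map w).sum ≤ 1) :
    (l.map fun i => w i • c i).sum ∈ C := by
  obtain ⟨k, hk, hsum_eq⟩ := hC.list_sum_smul_mem_sum_smul ⟨0, h0⟩ w c l hw hc
  rw [← hsum_eq]
  exact hC.smul_mem_of_zero_mem h0 hk ⟨List.sum_nonneg (by simpa using hw), hsum⟩

theorem isCompact_closure_convexHull {E : Type*} [AddCommGroup E] [Module ℝ E]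
    [UniformSpace E] [IsUniformAddGroup E] [LocallyConvexSpace ℝ E] [ContinuousSMul ℝ E]
    [CompleteSpace E] {K : Set E} (hK : IsCompact K) : IsCompact (closure (convexHull ℝ K)) :=
  (totallyBounded_convexHull.mpr hK.totallyBounded).closure.isCompact_of_isClosed
    isClosed_closure

section Bilinear

variable {E₁ E₂ F : Type*}
    [NormedAddCommGroup E₁] [NormedSpace ℂ E₁] [NormedAddCommGroup E₂] [NormedSpace ℂ E₂]
    [NormedAddCommGroup F] [NormedSpace ℂ F]

theorem projTensorSeminorm_tmul_le (x : E₁) (y : E₂) :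
    projTensorSeminorm (x ⊗ₜ[ℂ] y) ≤ ‖x‖ * ‖y‖ := by
  refine csInf_le ⟨0, ?_⟩ ⟨[(x, y)], by simp, by simp⟩
  rintro _ ⟨l, -, rfl⟩
  exact List.sum_nonneg (by simp only [List.mem_map]; rintro _ ⟨p, -, rfl⟩; positivity)

theorem exists_list_of_projTensorSeminorm_lt {z : E₁ ⊗[ℂ] E₂} {c : ℝ}
    (hz : projTensorSeminorm z < c) :
    ∃ l : List (E₁ × E₂), z = (l.map fun p => p.1 ⊗ₜ[ℂ] p.2).sum ∧
      (l.map fun p => ‖p.1‖ * ‖p.2‖).sum < c := by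
  have hne : {c : ℝ | ∃ l : List (E₁ × E₂), z = (l.map fun p => p.1 ⊗ₜ[ℂ] p.2).sum ∧
      c = (l.map fun p => ‖p.1‖ * ‖p.2‖).sum}.Nonempty := by
    obtain ⟨S, hS⟩ := TensorProduct.exists_multiset z
    refine ⟨_, S.toList, ?_, rfl⟩
    conv_lhs => rw [hS, ← Multiset.coe_toList S]
    simp
  obtain ⟨_, ⟨l, hl, rfl⟩, hlt⟩ := exists_lt_of_csInf_lt hne hz
  exact ⟨l, hl, hlt⟩

theorem ContinuousLinearMap.image2_closedBall_subset_closure (T : E₁ →L[ℂ] E₂ →L[ℂ] F) :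
    image2 (fun x y => T x y) (closedBall 0 1) (closedBall 0 1) ⊆
      closure (image2 (fun x y => T x y) (ball 0 1) (ball 0 1)) := by
  rw [← closure_ball (0 : E₁) one_ne_zero, ← closure_ball (0 : E₂) one_ne_zero,
    ← image_uncurry_prod, ← image_uncurry_prod, ← closure_prod_eq]
  exact image_closure_subset_closure_image T.continuous₂

theorem ContinuousLinearMap.apply_apply_mem_smul_image2_closedBall
    (T : E₁ →L[ℂ] E₂ →L[ℂ] F) (x : E₁) (y : E₂) :
    T x y ∈ (‖x‖ * ‖y‖) • image2 (fun x y => T x y) (closedBall 0 1) (closedBall 0 1) := by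
  refine ⟨T (‖x‖⁻¹ • x) (‖y‖⁻¹ • y), mem_image2_of_mem (inv_norm_smul_mem_unitClosedBall x)
    (inv_norm_smul_mem_unitClosedBall y), ?_⟩
  rcases eq_or_ne x 0 with rfl | hx
  · simp
  rcases eq_or_ne y 0 with rfl | hy
  · simp
  simp only [map_smul_of_tower, smul_apply, smul_smul]
  rw [show ‖x‖ * ‖y‖ * (‖x‖⁻¹ * ‖y‖⁻¹) = 1 by field_simp, one_smul]

variable {T : E₁ →L[ℂ] E₂ →L[ℂ] F} {T' : E₁ ⊗[ℂ] E₂ →ₗ[ℂ] F}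

theorem image2_ball_subset_image_projTensorSeminorm_lt
    (hT' : ∀ (x : E₁) (y : E₂), T' (x ⊗ₜ[ℂ] y) = T x y) :
    image2 (fun x y => T x y) (ball (0 : E₁) 1) (ball (0 : E₂) 1) ⊆
      T' '' {z | projTensorSeminorm z < 1} := by
  rintro _ ⟨x, hx, y, hy, rfl⟩
  rw [mem_ball_zero_iff] at hx hy
  refine ⟨x ⊗ₜ[ℂ] y, ?_, hT' x y⟩
  calc projTensorSeminorm (x ⊗ₜ[ℂ] y) ≤ ‖x‖ * ‖y‖ := projTensorSeminorm_tmul_le x y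
    _ < 1 := mul_lt_one_of_nonneg_of_lt_one_left (norm_nonneg x) hx hy.le

theorem image_projTensorSeminorm_lt_subset_convexHull
    (hT' : ∀ (x : E₁) (y : E₂), T' (x ⊗ₜ[ℂ] y) = T x y) :
    T' '' {z | projTensorSeminorm z < 1} ⊆
      convexHull ℝ (closure (image2 (fun x y => T x y) (ball (0 : E₁) 1) (ball (0 : E₂) 1))) := by
  rintro _ ⟨z, hz, rfl⟩
  obtain ⟨l, rfl, hl⟩ := exists_list_of_projTensorSeminorm_lt hz
  choose k hk hTk using fun p : E₁ × E₂ => T.apply_apply_mem_smul_image2_closedBall p.1 p.2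
  have hT'_sum : T' (l.map fun p => p.1 ⊗ₜ[ℂ] p.2).sum =
      (l.map fun p => (‖p.1‖ * ‖p.2‖) • k p).sum := by
    simp only [map_list_sum, List.map_map, Function.comp_def, hT', hTk]
  rw [hT'_sum]
  have h0 : (0 : F) ∈ closure (image2 (fun x y => T x y) (ball (0 : E₁) 1) (ball (0 : E₂) 1)) :=
    subset_closure ⟨0, mem_ball_self one_pos, 0, mem_ball_self one_pos, by simp⟩
  exact (convex_convexHull ℝ _).list_sum_smul_mem (subset_convexHull ℝ _ h0)
    (fun p _ => by positivity)
    (fun p _ => subset_convexHull ℝ _ (T.image2_closedBall_subset_closure (hk p))) hl.le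

end Bilinear

/-- a bounded bilinear map `T : E₁ × E₂ → F` is compact if and only if the
associated linear map `T̃ : E₁ ⊗ E₂ → F` (with `T̃(x ⊗ y) = T(x,y)`) maps the open unit ball
of the projective tensor seminorm to a relatively compact set. -/
theorem compact_bilinear_iff_tensor_map_compact {E₁ E₂ F : Type*}
    [NormedAddCommGroup E₁] [NormedSpace ℂ E₁] [NormedAddCommGroup E₂] [NormedSpace ℂ E₂]
    [NormedAddCommGroup F] [NormedSpace ℂ F] [CompleteSpace F]
    (T : E₁ →L[ℂ] E₂ →L[ℂ] F) (T' : E₁ ⊗[ℂ] E₂ →ₗ[ℂ] F)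
    (hT' : ∀ (x : E₁) (y : E₂), T' (x ⊗ₜ[ℂ] y) = T x y) :
    IsCompact (closure (Set.image2 (fun x y => T x y) (ball (0 : E₁) 1) (ball (0 : E₂) 1))) ↔
    IsCompact (closure (⇑T' '' {z : E₁ ⊗[ℂ] E₂ | projTensorSeminorm z < 1})) := by
  constructor
  · intro hK
    exact (isCompact_closure_convexHull hK).of_isClosed_subset isClosed_closure
      (closure_mono (image_projTensorSeminorm_lt_subset_convexHull hT'))
  · intro hK
    exact hK.of_isClosed_subset isClosed_closure
      (closure_mono (image2_ball_subset_image_projTensorSeminorm_lt hT'))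
end

section
/- Let A = ℓ∞(ℕ,ℂ) be the Banach algebra of bounded complex sequences with pointwise multiplication and the supremum norm, with unit 1 (the constant sequence with value 1), and define T : A → A by T(a) = a + a₀·1, where a₀ is the term of a at index 0. Then T is the sum of the identity homomorphism and a rank-one bounded homomorphism, yet T is not a cf-homomorphism: its failure of multiplicativity S_T is not a compact bilinear map. -/
/-!
Since `a ↦ a₀` is multiplicative, `T a = a + a₀ • 1` has `S_T (a, b) = a₀ • b + b₀ • a`.
For `a = ½ eₙ₊₁` and `b = ½ e₀` this is `¼ eₙ₊₁`, so the image of the product of the open unit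
balls contains a `¼`-separated sequence, and its closure cannot be compact.
-/

open Metric
open scoped ENNReal

theorem Metric.not_isCompact_of_pairwise_le_dist {X : Type*} [PseudoMetricSpace X] {s : Set X}
    {u : ℕ → X} {ε : ℝ} (hε : 0 < ε) (hu : ∀ n, u n ∈ s)
    (hsep : Pairwise fun i j => ε ≤ dist (u i) (u j)) : ¬ IsCompact s := by
  intro hs
  obtain ⟨_, -, σ, hσ, hlim⟩ := hs.isSeqCompact hu
  obtain ⟨N, hN⟩ := Metric.cauchySeq_iff.1 hlim.cauchySeq ε hε
  have hclose : dist (u (σ (N + 1))) (u (σ N)) < ε := hN _ (by omega) _ le_rfl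
  exact (hsep (hσ.injective.ne (by omega))).not_gt hclose

theorem lp.norm_le_dist_single_single {α : Type*} [DecidableEq α] {E : α → Type*}
    [∀ i, NormedAddCommGroup (E i)] {p : ℝ≥0∞} [Fact (1 ≤ p)] {i j : α} (hij : i ≠ j)
    (x : E i) (y : E j) : ‖x‖ ≤ dist (lp.single p i x) (lp.single p j y) := by
  have hp : p ≠ 0 := (zero_lt_one.trans_le Fact.out).ne'
  have hcoord : (lp.single p i x - lp.single p j y) i = x := by
    rw [lp.coeFn_sub, Pi.sub_apply, lp.single_apply_self, lp.single_apply_ne p j y hij, sub_zero]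
  calc ‖x‖ = ‖(lp.single p i x - lp.single p j y) i‖ := by rw [hcoord]
    _ ≤ dist (lp.single p i x) (lp.single p j y) := by
      rw [dist_eq_norm]; exact lp.norm_apply_le_norm hp _ i

namespace ContinuousLinearMap

variable {𝕜 A : Type*} [NormedField 𝕜] [NormedRing A] [NormedAlgebra 𝕜 A]
  {φ : A →L[𝕜] 𝕜}

theorem smulRight_one_map_mul (hφ : ∀ a b, φ (a * b) = φ a * φ b) (a b : A) :
    φ.smulRight (1 : A) (a * b) = φ.smulRight 1 a * φ.smulRight 1 b := by
  simp only [smulRight_apply, hφ, smul_mul_smul_comm, one_mul]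

theorem mul_sub_map_mul_of_apply_eq_add_smul_one (hφ : ∀ a b, φ (a * b) = φ a * φ b)
    {T : A →L[𝕜] A} (hT : ∀ a, T a = a + φ a • 1) (a b : A) :
    T a * T b - T (a * b) = φ a • b + φ b • a := by
  simp only [hT, hφ, add_mul, mul_add, smul_mul_assoc, mul_smul_comm, one_mul, mul_one]
  module

end ContinuousLinearMap

/-- on `A = ℓ∞(ℕ,ℂ)` with pointwise product and unit `1` (the constant
sequence `1`), the map `T(a) = a + a₀ • 1` is the sum of the identity homomorphism and the
rank-one bounded homomorphism `T₂(a) = a₀ • 1`, yet `T` is not a cf-homomorphism: its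
failure of multiplicativity `S_T` is not a compact bilinear map. -/
theorem linfty_homomorphism_plus_rank_one_not_cf :
    ∃ T T₂ : lp (fun _ : ℕ => ℂ) ∞ →L[ℂ] lp (fun _ : ℕ => ℂ) ∞,
      (∀ a : lp (fun _ : ℕ => ℂ) ∞, T₂ a = a 0 • (1 : lp (fun _ : ℕ => ℂ) ∞)) ∧
      (∀ a b : lp (fun _ : ℕ => ℂ) ∞, T₂ (a * b) = T₂ a * T₂ b) ∧
      (∀ a : lp (fun _ : ℕ => ℂ) ∞,
        T₂ a ∈ Submodule.span ℂ {(1 : lp (fun _ : ℕ => ℂ) ∞)}) ∧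
      (∀ a : lp (fun _ : ℕ => ℂ) ∞, T a = a + T₂ a) ∧
      ¬ IsCompact (closure (Set.image2 (fun a b => T a * T b - T (a * b))
        (ball (0 : lp (fun _ : ℕ => ℂ) ∞) 1) (ball (0 : lp (fun _ : ℕ => ℂ) ∞) 1))) := by
  set φ := lp.evalCLM ℂ (fun _ : ℕ => ℂ) ∞ 0
  have hφ : ∀ a b, φ (a * b) = φ a * φ b := fun a b => rfl
  set T := ContinuousLinearMap.id ℂ _ + φ.smulRight 1
  refine ⟨T, φ.smulRight 1, fun a => rfl, ContinuousLinearMap.smulRight_one_map_mul hφ,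
    fun a => Submodule.smul_mem _ _ (Submodule.mem_span_singleton_self _), fun a => rfl, ?_⟩
  have hsingle_mem (n : ℕ) : lp.single ∞ n (1 / 2 : ℂ) ∈ ball (0 : lp (fun _ : ℕ => ℂ) ∞) 1 := by
    rw [mem_ball_zero_iff, lp.norm_single (by simp)]
    norm_num
  have hdefect (n : ℕ) : T (lp.single ∞ (n + 1) (1 / 2 : ℂ)) * T (lp.single ∞ 0 (1 / 2 : ℂ))
      - T (lp.single ∞ (n + 1) (1 / 2) * lp.single ∞ 0 (1 / 2)) = lp.single ∞ (n + 1) (1 / 4) := by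
    have ha : φ (lp.single ∞ (n + 1) (1 / 2 : ℂ)) = 0 :=
      lp.single_apply_ne (E := fun _ : ℕ => ℂ) ∞ (n + 1) (1 / 2) n.succ_ne_zero.symm
    have hb : φ (lp.single ∞ 0 (1 / 2 : ℂ)) = 1 / 2 :=
      lp.single_apply_self (E := fun _ : ℕ => ℂ) ∞ 0 _
    rw [ContinuousLinearMap.mul_sub_map_mul_of_apply_eq_add_smul_one hφ (fun a => rfl), ha, hb,
      zero_smul, zero_add, ← lp.single_smul]
    norm_num
  refine Metric.not_isCompact_of_pairwise_le_dist (by norm_num : (0 : ℝ) < 1 / 4)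
    (fun n => subset_closure ⟨_, hsingle_mem (n + 1), _, hsingle_mem 0, hdefect n⟩)
    (fun i j hij => ?_)
  simpa using lp.norm_le_dist_single_single (E := fun _ : ℕ => ℂ) (p := ∞)
    (Nat.succ_injective.ne hij) (1 / 4 : ℂ) (1 / 4 : ℂ)
end

section
/- Let A = c₀ = C₀(ℕ,ℂ) be the Banach algebra of complex sequences converging to 0, with pointwise multiplication and the supremum norm, and let T : A → A be the bounded linear map T(a) = 2a. Then: (i) A has compact multiplication, i.e. for every a ∈ A the multiplication operator b ↦ a·b is a compact linear operator on A, and consequently for every a ∈ A the linear maps b ↦ S_T(a,b) and b ↦ S_T(b,a) are compact (T is a semi-cf-homomorphism); (ii) nevertheless the bilinear map S_T, which is given by S_T(a,b) = 2ab, is not weakly compact, so T is not a wcf-homomorphism. -/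
/-!
On a discrete space, multiplication by `a ∈ C₀` is the operator-norm limit of the finite-rank
operators `b ↦ 1ₛ · a · b` over finite sets `s`, hence compact; since `S_T(a, b) = 2ab`, the
partial maps of `S_T` are compact as well. On the other hand `S_T(eₛ, eₛ) = ½ · 1ₛ` for
`eₛ = ½ · 1ₛ`, and as coordinate evaluations are weakly continuous, a weak cluster point of this
net would be a `c₀` sequence with every coordinate equal to `½`.
-/

open Metric ZeroAtInfty Filter Topology

namespace ZeroAtInftyContinuousMap

section Norm

variable {X β : Type*} [TopologicalSpace X] [NormedAddCommGroup β]

theorem norm_apply_le (f : C₀(X, β)) (x : X) : ‖f x‖ ≤ ‖f‖ := by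
  rw [← norm_toBCF_eq_norm]
  exact f.toBCF.norm_coe_le_norm x

theorem norm_le {f : C₀(X, β)} {C : ℝ} (hC : 0 ≤ C) : ‖f‖ ≤ C ↔ ∀ x, ‖f x‖ ≤ C := by
  rw [← norm_toBCF_eq_norm, BoundedContinuousFunction.norm_le hC]
  rfl

end Norm

section Eval

variable {X 𝕜 : Type*} [TopologicalSpace X] [NontriviallyNormedField 𝕜]

noncomputable def evalCLM (x : X) : C₀(X, 𝕜) →L[𝕜] 𝕜 :=
  LinearMap.mkContinuous
    { toFun := fun f => f x
      map_add' := fun _ _ => rfl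
      map_smul' := fun _ _ => rfl }
    1 fun f => by simpa using norm_apply_le f x

@[simp] theorem evalCLM_apply (x : X) (f : C₀(X, 𝕜)) : evalCLM x f = f x := rfl

theorem continuous_apply_toWeakSpace_symm (x : X) :
    Continuous fun w : WeakSpace 𝕜 C₀(X, 𝕜) => (toWeakSpace 𝕜 C₀(X, 𝕜)).symm w x :=
  WeakBilin.eval_continuous _ (evalCLM x)

theorem not_isCompact_closure_toWeakSpace_of_tendsto_apply [NoncompactSpace X]
    {ι : Type*} {l : Filter ι} [l.NeBot] {t : Set C₀(X, 𝕜)} {f : ι → C₀(X, 𝕜)}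
    (hft : ∀ i, f i ∈ t) {c : 𝕜} (hc : c ≠ 0) (hf : ∀ x, Tendsto (fun i => f i x) l (𝓝 c)) :
    ¬ IsCompact (closure (toWeakSpace 𝕜 C₀(X, 𝕜) '' t)) := by
  intro hK
  have hfK : map (toWeakSpace 𝕜 C₀(X, 𝕜) ∘ f) l ≤ 𝓟 (closure (toWeakSpace 𝕜 C₀(X, 𝕜) '' t)) :=
    le_principal_iff.mpr <| mem_map.mpr <| Eventually.of_forall fun i =>
      subset_closure (Set.mem_image_of_mem _ (hft i))
  obtain ⟨w, -, hw⟩ := hK.exists_clusterPt hfK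
  set g := (toWeakSpace 𝕜 C₀(X, 𝕜)).symm w
  have hg : ∀ x, g x = c := fun x =>
    have := hw.map (continuous_apply_toWeakSpace_symm x).continuousAt tendsto_map
    eq_of_nhds_neBot (this.mono (by rw [map_map]; exact hf x))
  have : Tendsto (fun _ : X => c) (cocompact X) (𝓝 0) := by
    simpa only [funext hg] using zero_at_infty g
  exact hc (tendsto_nhds_unique tendsto_const_nhds this)

end Eval

section Discrete

variable {X 𝕜 : Type*} [TopologicalSpace X] [DiscreteTopology X] [NontriviallyNormedField 𝕜]

open scoped Classical in
noncomputable def extendByZero (s : Finset X) : (s → 𝕜) →L[𝕜] C₀(X, 𝕜) :=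
  LinearMap.mkContinuous
    { toFun := fun v =>
        { toFun := fun x => if h : x ∈ s then v ⟨x, h⟩ else 0
          continuous_toFun := continuous_of_discreteTopology
          zero_at_infty' := by
            rw [cocompact_eq_cofinite]
            refine tendsto_const_nhds.congr' ?_
            filter_upwards [s.finite_toSet.compl_mem_cofinite] with x hx
            simp [show x ∉ s from hx] }
      map_add' := fun v w => by ext x; by_cases h : x ∈ s <;> simp [h]
      map_smul' := fun c v => by ext x; by_cases h : x ∈ s <;> simp [h] }
    1 fun v => by
      rw [one_mul, norm_le (norm_nonneg v)]
      intro x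
      by_cases h : x ∈ s
      · simpa [h] using norm_le_pi_norm v ⟨x, h⟩
      · simp [h]

open scoped Classical in
theorem extendByZero_apply (s : Finset X) (v : s → 𝕜) (x : X) :
    extendByZero s v x = if h : x ∈ s then v ⟨x, h⟩ else 0 := rfl

theorem norm_extendByZero_le (s : Finset X) (v : s → 𝕜) : ‖extendByZero s v‖ ≤ ‖v‖ := by
  refine (extendByZero s).le_of_opNorm_le ?_ v |>.trans_eq (one_mul _)
  unfold extendByZero
  exact LinearMap.mkContinuous_norm_le _ zero_le_one _

noncomputable def restrict (s : Finset X) : C₀(X, 𝕜) →L[𝕜] (s → 𝕜) :=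
  ContinuousLinearMap.pi fun x => evalCLM (x : X)

theorem extendByZero_restrict_apply (s : Finset X) (f : C₀(X, 𝕜)) (x : X) :
    extendByZero s (restrict s f) x = (s : Set X).indicator f x := by
  by_cases h : x ∈ s <;> simp [extendByZero_apply, restrict, h]

theorem norm_extendByZero_restrict_mul_sub_mul_le {s : Finset X} {a : C₀(X, 𝕜)} {ε : ℝ}
    (hε : 0 ≤ ε) (ha : ∀ x ∉ s, ‖a x‖ ≤ ε) :
    ‖extendByZero s ∘L restrict s ∘L ContinuousLinearMap.mul 𝕜 _ a -
      ContinuousLinearMap.mul 𝕜 _ a‖ ≤ ε := by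
  refine ContinuousLinearMap.opNorm_le_bound _ hε fun b => (norm_le (by positivity)).mpr fun x => ?_
  by_cases h : x ∈ s
  · simp [extendByZero_restrict_apply, h, mul_nonneg hε (norm_nonneg b)]
  · simpa [extendByZero_restrict_apply, h] using
      mul_le_mul (ha x h) (norm_apply_le b x) (norm_nonneg _) hε

theorem tendsto_extendByZero_restrict_mul (a : C₀(X, 𝕜)) :
    Tendsto (fun s => extendByZero s ∘L restrict s ∘L ContinuousLinearMap.mul 𝕜 _ a) atTop
      (𝓝 (ContinuousLinearMap.mul 𝕜 _ a)) := by
  refine Metric.tendsto_nhds.mpr fun ε hε => ?_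
  have hfin : {x | ε / 2 < ‖a x‖}.Finite := by
    have := (zero_at_infty a).eventually (Metric.closedBall_mem_nhds 0 (half_pos hε))
    rw [cocompact_eq_cofinite, eventually_cofinite] at this
    simpa using this
  filter_upwards [eventually_ge_atTop hfin.toFinset] with s hs
  rw [dist_eq_norm]
  refine (norm_extendByZero_restrict_mul_sub_mul_le (half_pos hε).le fun x hx => ?_).trans_lt
    (half_lt_self hε)
  by_contra! h
  exact hx (hs (hfin.mem_toFinset.mpr h))

theorem isCompactOperator_mul [ProperSpace 𝕜] (a : C₀(X, 𝕜)) :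
    IsCompactOperator (ContinuousLinearMap.mul 𝕜 _ a) :=
  isCompactOperator_of_tendsto (tendsto_extendByZero_restrict_mul a) <| Eventually.of_forall
    fun s => ((isCompactOperator_of_locallyCompactSpace_rng (extendByZero s)).comp_clm
      (restrict s ∘L ContinuousLinearMap.mul 𝕜 _ a) :)

end Discrete

end ZeroAtInftyContinuousMap

open ZeroAtInftyContinuousMap

/-- on `A = c₀ = C₀(ℕ,ℂ)` with pointwise product, the map `T(a) = 2a` is a
bounded linear map such that: (i) `A` has compact multiplication (for every `a`, the operator
`b ↦ a * b` is compact), and consequently for every `a` the linear maps `b ↦ S_T(a,b)` and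
`b ↦ S_T(b,a)` are compact (so `T` is a semi-cf-homomorphism); (ii) nevertheless
`S_T(a,b) = 2ab` and `S_T` is not a weakly compact bilinear map, so `T` is not a
wcf-homomorphism. -/
theorem c0_semi_cf_not_wcf :
    ∃ T : C₀(ℕ, ℂ) →L[ℂ] C₀(ℕ, ℂ),
      (∀ a : C₀(ℕ, ℂ), T a = (2 : ℂ) • a) ∧
      (∀ a : C₀(ℕ, ℂ),
        IsCompact (closure ((fun b => a * b) '' ball (0 : C₀(ℕ, ℂ)) 1)) ∧
        IsCompact (closure ((fun b => b * a) '' ball (0 : C₀(ℕ, ℂ)) 1))) ∧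
      (∀ a : C₀(ℕ, ℂ),
        IsCompact (closure ((fun b => T a * T b - T (a * b)) '' ball (0 : C₀(ℕ, ℂ)) 1)) ∧
        IsCompact (closure ((fun b => T b * T a - T (b * a)) '' ball (0 : C₀(ℕ, ℂ)) 1))) ∧
      (∀ a b : C₀(ℕ, ℂ), T a * T b - T (a * b) = (2 : ℂ) • (a * b)) ∧
      ¬ IsCompact (closure ((toWeakSpace ℂ C₀(ℕ, ℂ)) ''
        (Set.image2 (fun a b => T a * T b - T (a * b))
          (ball (0 : C₀(ℕ, ℂ)) 1) (ball (0 : C₀(ℕ, ℂ)) 1)))) := by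
  set T : C₀(ℕ, ℂ) →L[ℂ] C₀(ℕ, ℂ) := (2 : ℂ) • ContinuousLinearMap.id ℂ _
  have hT (a : C₀(ℕ, ℂ)) : T a = (2 : ℂ) • a := rfl
  have hS (a b : C₀(ℕ, ℂ)) : T a * T b - T (a * b) = (2 : ℂ) • (a * b) := by
    rw [hT, hT, hT, smul_mul_smul_comm]
    module
  have hmul (a : C₀(ℕ, ℂ)) : IsCompact (closure ((fun b => a * b) '' ball 0 1)) :=
    (isCompactOperator_mul a).isCompact_closure_image_ball 1
  refine ⟨T, hT, fun a => ⟨hmul a, by simpa only [mul_comm] using hmul a⟩,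
    fun a => ⟨?_, ?_⟩, hS, ?_⟩
  · convert hmul ((2 : ℂ) • a) using 4 with b
    rw [hS, smul_mul_assoc]
  · convert hmul ((2 : ℂ) • a) using 4 with b
    rw [hS, smul_mul_assoc, mul_comm]
  · set e : Finset ℕ → C₀(ℕ, ℂ) := fun s => extendByZero s fun _ => 1 / 2
    have he (s : Finset ℕ) : e s ∈ ball 0 1 := by
      rw [mem_ball_zero_iff]
      refine (norm_extendByZero_le s _).trans_lt ((pi_norm_const_le _).trans_lt ?_)
      norm_num
    refine not_isCompact_closure_toWeakSpace_of_tendsto_apply (l := atTop)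
      (fun s => Set.mem_image2_of_mem (he s) (he s)) (c := 1 / 2) (by norm_num)
      fun n => tendsto_const_nhds.congr' ?_
    filter_upwards [eventually_ge_atTop {n}] with s hs
    have hn : n ∈ s := hs (Finset.mem_singleton_self n)
    simp [hS, e, extendByZero_apply, hn]
end
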